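/- Let ℓ, ℓ̃ be exponentially concave β-smooth C¹ functions on [0,1] with ℓ(1/2)=ℓ̃(1/2)=0, generating portfolio maps π, π̃ on Δₙ via πᵢ(p) = pᵢ(1 + (1/n)ℓ'(pᵢ) - (1/n)Σⱼ pⱼℓ'(pⱼ)). Then for any u ∈ Δₙ and r ∈ Δₙ, |log((π(u)·r)/(u·r)) - log((π̃(u)·r)/(u·r))| ≤ 2·exp(2√β/n)·d(ℓ,ℓ̃), where d(ℓ,ℓ̃) = max_{x∈[0,1]} |ℓ'(x) - ℓ̃'(x)|. -/

import Mathlib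

/-!
Write `s = √β`. Exp-concavity makes `(e^ℓ)' = e^ℓ ℓ'` non-increasing, and together with
`ℓ'' ≥ -β` this forces `ℓ'(0) ≤ s`; the tangent line of `e^ℓ` at `y` then gives
`y ℓ'(y) ≤ s y / (1 + s y)`, and the reflection `t ↦ ℓ (1 - t)` gives the matching lower bound
for `(1 - x) ℓ'(x)`. As `t ↦ s t / (1 + s t)` is concave, summing over the simplex bounds every
weight ratio `πᵢ(u) / uᵢ` below by `e^{-2s/n} / n`, while replacing `ℓ` by `ℓ̃` moves it by at
most `2 d(ℓ, ℓ̃) / n`. Finally `(π(u)·r) / (u·r)` is an average of these ratios, and `log` is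
`1/κ`-Lipschitz on `[κ, ∞)`.
-/

open Set Real

theorem ConcaveOn.antitoneOn_of_hasDerivWithinAt {S : Set ℝ} {f f' : ℝ → ℝ}
    (hf : ConcaveOn ℝ S f) (hd : ∀ x ∈ S, HasDerivWithinAt f (f' x) S x) : AntitoneOn f' S := by
  intro x hx y hy hxy
  rcases hxy.eq_or_lt with rfl | hlt
  · rfl
  · exact (hf.le_slope_of_hasDerivWithinAt hx hy hlt (hd y hy)).trans
      (hf.slope_le_of_hasDerivWithinAt hx hy hlt (hd x hx))

theorem ConcaveOn.le_add_mul_sub_of_hasDerivWithinAt {S : Set ℝ} {f : ℝ → ℝ} {f'x x y : ℝ}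
    (hf : ConcaveOn ℝ S f) (hx : x ∈ S) (hy : y ∈ S) (hd : HasDerivWithinAt f f'x S x) :
    f y ≤ f x + f'x * (y - x) := by
  rcases lt_trichotomy x y with hxy | rfl | hyx
  · have := hf.slope_le_of_hasDerivWithinAt hx hy hxy hd
    rw [slope_def_field, div_le_iff₀ (sub_pos.2 hxy)] at this
    linarith
  · simp
  · have := hf.le_slope_of_hasDerivWithinAt hy hx hyx hd
    rw [slope_def_field, le_div_iff₀ (sub_pos.2 hyx)] at this
    linarith

theorem mul_sub_le_sub_of_le_hasDerivWithinAt {S : Set ℝ} {f f' : ℝ → ℝ} {a x y : ℝ}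
    (hxy : x ≤ y) (hS : Icc x y ⊆ S) (hd : ∀ z ∈ Icc x y, HasDerivWithinAt f (f' z) S z)
    (hle : ∀ z ∈ Icc x y, a ≤ f' z) : a * (y - x) ≤ f y - f x := by
  have hmono : MonotoneOn (fun z => f z - a * z) (Icc x y) := by
    refine monotoneOn_of_hasDerivWithinAt_nonneg (convex_Icc x y) (f' := fun z => f' z - a)
      (fun z hz => ((hd z hz).continuousWithinAt.mono hS).sub
        (continuousWithinAt_const.mul continuousWithinAt_id))
      (fun z hz => ?_) (fun z hz => sub_nonneg.2 (hle z (interior_subset hz)))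
    have hz' := interior_subset hz
    simpa using ((hd z hz').mono (interior_subset.trans hS)).fun_sub
      ((hasDerivWithinAt_id z _).const_mul a)
  have := hmono (left_mem_Icc.2 hxy) (right_mem_Icc.2 hxy) hxy
  linarith

theorem mul_div_one_add_mul_le_tangent {s w t : ℝ} (hs : 0 ≤ s) (hw : 0 ≤ w) (ht : 0 ≤ t) :
    s * t / (1 + s * t) ≤ s * w / (1 + s * w) + s / (1 + s * w) ^ 2 * (t - w) := by
  have hst : 0 < 1 + s * t := by positivity
  have hsw : 0 < 1 + s * w := by positivity
  have : s * w / (1 + s * w) + s / (1 + s * w) ^ 2 * (t - w) - s * t / (1 + s * t)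
      = s ^ 2 * (t - w) ^ 2 / ((1 + s * w) ^ 2 * (1 + s * t)) := by
    field_simp
    ring
  linarith [show 0 ≤ s ^ 2 * (t - w) ^ 2 / ((1 + s * w) ^ 2 * (1 + s * t)) by positivity]

open Finset in
theorem sum_mul_div_one_add_mul_le {ι : Type*} (E : Finset ι) {s : ℝ} {t : ι → ℝ} (hs : 0 ≤ s)
    (ht : ∀ j ∈ E, 0 ≤ t j) :
    ∑ j ∈ E, s * t j / (1 + s * t j) ≤ #E * s * (∑ j ∈ E, t j) / (#E + s * ∑ j ∈ E, t j) := by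
  rcases E.eq_empty_or_nonempty with rfl | hE
  · simp
  set V := ∑ j ∈ E, t j
  have hm : (0:ℝ) < #E := by exact_mod_cast hE.card_pos
  have hV : 0 ≤ V := sum_nonneg ht
  -- tangent line at the mean value `V / #E`
  set w := V / #E
  have hmw : #E * w = V := mul_div_cancel₀ V hm.ne'
  calc ∑ j ∈ E, s * t j / (1 + s * t j)
      ≤ ∑ j ∈ E, (s * w / (1 + s * w) + s / (1 + s * w) ^ 2 * (t j - w)) :=
        sum_le_sum fun j hj => mul_div_one_add_mul_le_tangent hs (by positivity) (ht j hj)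
    _ = #E * (s * w / (1 + s * w)) := by
        rw [sum_add_distrib, sum_const, nsmul_eq_mul, ← mul_sum, sum_sub_distrib, sum_const,
          nsmul_eq_mul, hmw, sub_self, mul_zero, add_zero]
    _ = #E * s * V / (#E + s * V) := by
        rw [← hmw]
        field_simp

theorem exp_neg_two_mul_div_le {N s v : ℝ} (hN : 2 ≤ N) (hs : 0 ≤ s) (hv0 : 0 ≤ v) (hv1 : v ≤ 1) :
    exp (-(2 * s / N)) ≤ N - s * v / (1 + s * v) - (N - 1) * s * v / (N - 1 + s * v) := by
  have hsv : s * v ≤ s := mul_le_of_le_one_right hs hv1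
  have hsv0 : 0 ≤ s * v := mul_nonneg hs hv0
  have hNs : 0 < N - 1 + s := by linarith
  have h1 : s * v / (1 + s * v) ≤ s / (1 + s) := by
    rw [div_le_div_iff₀ (by positivity) (by positivity)]
    nlinarith
  have h2 : (N - 1) * s * v / (N - 1 + s * v) ≤ (N - 1) * s / (N - 1 + s) := by
    rw [div_le_div_iff₀ (by linarith) (by linarith)]
    nlinarith [mul_le_mul_of_nonneg_left hsv (by nlinarith : (0:ℝ) ≤ (N - 1) * (N - 1))]
  calc exp (-(2 * s / N)) = (exp (2 * s / N))⁻¹ := exp_neg _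
    _ ≤ (2 * s / N + 1)⁻¹ := inv_anti₀ (by positivity) (add_one_le_exp _)
    _ = N / (N + 2 * s) := by field_simp; ring
    _ ≤ (N - 1) ^ 2 / (N - 1 + s) := by
        rw [div_le_div_iff₀ (by positivity) hNs]
        nlinarith [mul_nonneg (mul_nonneg (by linarith : (0:ℝ) ≤ N) (by linarith : (0:ℝ) ≤ N - 1))
            (by linarith : (0:ℝ) ≤ N - 2),
          mul_nonneg hs (mul_nonneg (by linarith : (0:ℝ) ≤ 2 * N - 1)
            (by linarith : (0:ℝ) ≤ N - 2))]
    _ ≤ 1 / (1 + s) + (N - 1) ^ 2 / (N - 1 + s) := le_add_of_nonneg_left (by positivity)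
    _ = N - s / (1 + s) - (N - 1) * s / (N - 1 + s) := by
        field_simp
        ring
    _ ≤ _ := by linarith

structure IsExpConcaveSmooth (β : ℝ) (ℓ ℓ' : ℝ → ℝ) : Prop where
  hasDerivWithinAt : ∀ x ∈ Icc (0:ℝ) 1, HasDerivWithinAt ℓ (ℓ' x) (Icc (0:ℝ) 1) x
  concaveOn_exp : ConcaveOn ℝ (Icc (0:ℝ) 1) (fun x => exp (ℓ x))
  abs_sub_le : ∀ x ∈ Icc (0:ℝ) 1, ∀ y ∈ Icc (0:ℝ) 1, |ℓ' x - ℓ' y| ≤ β * |x - y|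

namespace IsExpConcaveSmooth

variable {β : ℝ} {ℓ ℓ' : ℝ → ℝ}

theorem reflect (h : IsExpConcaveSmooth β ℓ ℓ') :
    IsExpConcaveSmooth β (fun t => ℓ (1 - t)) (fun t => -ℓ' (1 - t)) := by
  have hmaps : MapsTo (fun t : ℝ => 1 - t) (Icc 0 1) (Icc 0 1) :=
    fun t ht => ⟨by linarith [ht.2], by linarith [ht.1]⟩
  refine ⟨fun x hx => ?_, ⟨convex_Icc 0 1, fun x hx y hy a b ha hb hab => ?_⟩,
    fun x hx y hy => ?_⟩
  · exact ((h.hasDerivWithinAt (1 - x) (hmaps hx)).comp x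
      ((hasDerivWithinAt_id x _).const_sub 1) hmaps).congr_deriv (by ring)
  · have := h.concaveOn_exp.2 (hmaps hx) (hmaps hy) ha hb hab
    simp only [smul_eq_mul] at this ⊢
    rwa [show a * (1 - x) + b * (1 - y) = 1 - (a * x + b * y) by linear_combination hab] at this
  · show |-ℓ' (1 - x) - -ℓ' (1 - y)| ≤ β * |x - y|
    rw [neg_sub_neg]
    simpa only [sub_sub_sub_cancel_left] using h.abs_sub_le (1 - y) (hmaps hy) (1 - x) (hmaps hx)

theorem hasDerivWithinAt_exp (h : IsExpConcaveSmooth β ℓ ℓ') {x : ℝ} (hx : x ∈ Icc (0:ℝ) 1) :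
    HasDerivWithinAt (fun t => exp (ℓ t)) (exp (ℓ x) * ℓ' x) (Icc (0:ℝ) 1) x :=
  (h.hasDerivWithinAt x hx).exp

theorem antitoneOn_exp_mul_deriv (h : IsExpConcaveSmooth β ℓ ℓ') :
    AntitoneOn (fun x => exp (ℓ x) * ℓ' x) (Icc (0:ℝ) 1) :=
  h.concaveOn_exp.antitoneOn_of_hasDerivWithinAt fun _ hx => h.hasDerivWithinAt_exp hx

theorem sq_sub_mul_le (h : IsExpConcaveSmooth β ℓ ℓ') (hβ : 0 ≤ β) {x t : ℝ} (hx : 0 ≤ x)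
    (ht : 0 < t) (hxt : x + t ≤ 1) (ha : 0 ≤ ℓ' x - β * t) : (ℓ' x - β * t) ^ 2 ≤ β := by
  set a := ℓ' x - β * t with ha_def
  have hsub : Icc x (x + t) ⊆ Icc 0 1 := Icc_subset_Icc hx hxt
  have hx01 : x ∈ Icc (0:ℝ) 1 := hsub (left_mem_Icc.2 (by linarith))
  have hxt01 : x + t ∈ Icc (0:ℝ) 1 := hsub (right_mem_Icc.2 (by linarith))
  have hlow : ∀ z ∈ Icc x (x + t), a ≤ ℓ' z := fun z hz => by
    have := (abs_le.1 (h.abs_sub_le x hx01 z (hsub hz))).2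
    rw [abs_of_nonpos (by linarith [hz.1] : x - z ≤ 0)] at this
    nlinarith [hz.2]
  have hinc : a * t ≤ ℓ (x + t) - ℓ x := by
    simpa using mul_sub_le_sub_of_le_hasDerivWithinAt (by linarith) hsub
      (fun z hz => h.hasDerivWithinAt z (hsub hz)) hlow
  have hgrowth : exp (ℓ x) * (1 + a * t) ≤ exp (ℓ (x + t)) := calc
    exp (ℓ x) * (1 + a * t) ≤ exp (ℓ x) * exp (a * t) := by
      gcongr
      linarith [add_one_le_exp (a * t)]
    _ = exp (ℓ x + a * t) := (exp_add _ _).symm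
    _ ≤ exp (ℓ (x + t)) := exp_le_exp.2 (by linarith)
  -- `exp ∘ ℓ` grows by a factor `1 + a t` while its derivative `exp (ℓ) ℓ'` cannot increase
  have hkey : exp (ℓ x) * ((1 + a * t) * a) ≤ exp (ℓ x) * (a + β * t) := calc
    exp (ℓ x) * ((1 + a * t) * a) = exp (ℓ x) * (1 + a * t) * a := by ring
    _ ≤ exp (ℓ (x + t)) * ℓ' (x + t) :=
      mul_le_mul hgrowth (hlow _ (right_mem_Icc.2 (by linarith))) ha (exp_pos _).le
    _ ≤ exp (ℓ x) * ℓ' x := h.antitoneOn_exp_mul_deriv hx01 hxt01 (by linarith)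
    _ = exp (ℓ x) * (a + β * t) := by rw [ha_def, sub_add_cancel]
  have : a ^ 2 * t ≤ β * t := by nlinarith [le_of_mul_le_mul_left hkey (exp_pos _)]
  exact le_of_mul_le_mul_right this ht

theorem deriv_le_sqrt (h : IsExpConcaveSmooth β ℓ ℓ') (hβ : 0 < β) {x : ℝ} (hx : 0 ≤ x)
    (hx1 : x < 1) : ℓ' x ≤ √β := by
  refine le_of_forall_pos_le_add fun ε hε => ?_
  set t := min (1 - x) (ε / β)
  have ht : 0 < t := lt_min (by linarith) (div_pos hε hβ)
  have hβt : β * t ≤ ε := calc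
    β * t ≤ β * (ε / β) := by gcongr; exact min_le_right _ _
    _ = ε := mul_div_cancel₀ ε hβ.ne'
  have : ℓ' x - β * t ≤ √β := by
    rcases le_total (ℓ' x - β * t) 0 with hneg | hpos
    · linarith [sqrt_nonneg β]
    · exact (le_abs_self _).trans (abs_le_sqrt (h.sq_sub_mul_le hβ.le hx ht
        (by linarith [min_le_left (1 - x) (ε / β)]) hpos))
  linarith

theorem mul_deriv_le (h : IsExpConcaveSmooth β ℓ ℓ') (hβ : 0 < β) {y : ℝ}
    (hy : y ∈ Icc (0:ℝ) 1) : y * ℓ' y ≤ √β * y / (1 + √β * y) := by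
  have h0 : (0:ℝ) ∈ Icc (0:ℝ) 1 := left_mem_Icc.2 zero_le_one
  have hs := sqrt_nonneg β
  have hanti : exp (ℓ y) * ℓ' y ≤ exp (ℓ 0) * ℓ' 0 := h.antitoneOn_exp_mul_deriv h0 hy hy.1
  have htangent : exp (ℓ 0) ≤ exp (ℓ y) + exp (ℓ y) * ℓ' y * (0 - y) :=
    h.concaveOn_exp.le_add_mul_sub_of_hasDerivWithinAt hy h0 (h.hasDerivWithinAt_exp hy)
  have hℓ'0 : ℓ' 0 ≤ √β := h.deriv_le_sqrt hβ le_rfl zero_lt_one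
  have hkey : ℓ' y * (1 + √β * y) ≤ √β := by
    have : exp (ℓ y) * (ℓ' y * (1 + √β * y)) ≤ exp (ℓ y) * √β := by
      nlinarith [mul_le_mul_of_nonneg_left hℓ'0 (exp_pos (ℓ 0)).le,
        mul_le_mul_of_nonneg_right htangent hs]
    exact le_of_mul_le_mul_left this (exp_pos _)
  rw [le_div_iff₀ (by nlinarith [mul_nonneg hs hy.1])]
  nlinarith [mul_le_mul_of_nonneg_left hkey hy.1]

theorem neg_le_one_sub_mul_deriv (h : IsExpConcaveSmooth β ℓ ℓ') (hβ : 0 < β) {x : ℝ}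
    (hx : x ∈ Icc (0:ℝ) 1) :
    -(√β * (1 - x) / (1 + √β * (1 - x))) ≤ (1 - x) * ℓ' x := by
  have := h.reflect.mul_deriv_le hβ (y := 1 - x) ⟨by linarith [hx.2], by linarith [hx.1]⟩
  simp only [sub_sub_cancel] at this
  linarith

end IsExpConcaveSmooth

/-- The ratio `πᵢ(u) / uᵢ` of the portfolio map generated by `ℓ`, where `ℓ'` is the derivative
of `ℓ`. -/
noncomputable def weightRatio (n : ℕ) (ℓ' : ℝ → ℝ) (u : Fin n → ℝ) (i : Fin n) : ℝ :=
  1 + (1 / (n:ℝ)) * ℓ' (u i) - (1 / (n:ℝ)) * ∑ j, u j * ℓ' (u j)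

theorem abs_weightRatio_sub_le {n : ℕ} {u : Fin n → ℝ} (hu : ∀ j, 0 ≤ u j) (hus : ∑ j, u j = 1)
    {ℓ' tℓ' : ℝ → ℝ} {D : ℝ} (hD : ∀ j, |ℓ' (u j) - tℓ' (u j)| ≤ D) (i : Fin n) :
    |weightRatio n ℓ' u i - weightRatio n tℓ' u i| ≤ 2 * D / n := by
  have hmean : |∑ j, u j * ℓ' (u j) - ∑ j, u j * tℓ' (u j)| ≤ D := calc
    _ = |∑ j, u j * (ℓ' (u j) - tℓ' (u j))| := by
        simp only [mul_sub, Finset.sum_sub_distrib]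
    _ ≤ ∑ j, u j * D := by
        refine (Finset.abs_sum_le_sum_abs _ _).trans (Finset.sum_le_sum fun j _ => ?_)
        rw [abs_mul, abs_of_nonneg (hu j)]
        exact mul_le_mul_of_nonneg_left (hD j) (hu j)
    _ = D := by rw [← Finset.sum_mul, hus, one_mul]
  have : weightRatio n ℓ' u i - weightRatio n tℓ' u i
      = ((ℓ' (u i) - tℓ' (u i)) - (∑ j, u j * ℓ' (u j) - ∑ j, u j * tℓ' (u j))) / n := by
    simp only [weightRatio]
    ring
  rw [this, abs_div, Nat.abs_cast]
  gcongr
  linarith [abs_sub (ℓ' (u i) - tℓ' (u i)) (∑ j, u j * ℓ' (u j) - ∑ j, u j * tℓ' (u j)), hD i]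

open Finset in
theorem IsExpConcaveSmooth.exp_neg_div_le_weightRatio {β : ℝ} {ℓ ℓ' : ℝ → ℝ}
    (h : IsExpConcaveSmooth β ℓ ℓ') (hβ : 0 < β) {n : ℕ} (hn : 2 ≤ n) {u : Fin n → ℝ}
    (hu : ∀ j, u j ∈ Icc (0:ℝ) 1) (hus : ∑ j, u j = 1) (i : Fin n) :
    exp (-(2 * √β / n)) / n ≤ weightRatio n ℓ' u i := by
  set E := univ.erase i
  have hN : (2:ℝ) ≤ n := by exact_mod_cast hn
  have hcard : (#E : ℝ) = n - 1 := by
    rw [card_erase_of_mem (mem_univ i), card_univ, Fintype.card_fin, Nat.cast_sub (by omega),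
      Nat.cast_one]
  have hE : ∑ j ∈ E, u j = 1 - u i := by rw [sum_erase_eq_sub (mem_univ i), hus]
  have hrest : ∑ j ∈ E, u j * ℓ' (u j) ≤ (n - 1) * √β * (1 - u i) / (n - 1 + √β * (1 - u i)) :=
    calc ∑ j ∈ E, u j * ℓ' (u j) ≤ ∑ j ∈ E, √β * u j / (1 + √β * u j) :=
          sum_le_sum fun j _ => h.mul_deriv_le hβ (hu j)
      _ ≤ _ := by
          simpa only [hcard, hE] using
            sum_mul_div_one_add_mul_le E (sqrt_nonneg β) fun j _ => (hu j).1
  have hself := h.neg_le_one_sub_mul_deriv hβ (hu i)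
  have hnum := exp_neg_two_mul_div_le hN (sqrt_nonneg β) (sub_nonneg.2 (hu i).2)
    (by linarith [(hu i).1])
  have hsplit : weightRatio n ℓ' u i * n
      = n + (1 - u i) * ℓ' (u i) - ∑ j ∈ E, u j * ℓ' (u j) := by
    rw [weightRatio, ← add_sum_erase _ _ (mem_univ i)]
    field_simp
    ring
  rw [div_le_iff₀ (by positivity), hsplit]
  linarith

theorem ContinuousOn.le_iSup_Icc {f : ℝ → ℝ} {a b x : ℝ} (hf : ContinuousOn f (Icc a b))
    (hx : x ∈ Icc a b) : f x ≤ ⨆ y : Icc a b, f y :=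
  le_ciSup (f := fun y : Icc a b => f y)
    (by simpa only [image_eq_range] using isCompact_Icc.bddAbove_image hf) ⟨x, hx⟩

theorem abs_log_sub_log_le_div {m x y : ℝ} (hm : 0 < m) (hx : m ≤ x) (hy : m ≤ y) :
    |log x - log y| ≤ |x - y| / m := by
  wlog hyx : y ≤ x generalizing x y
  · rw [abs_sub_comm, abs_sub_comm x]
    exact this hy hx (le_of_not_ge hyx)
  have hy0 : 0 < y := hm.trans_le hy
  rw [abs_of_nonneg (sub_nonneg.2 (log_le_log hy0 hyx)), abs_of_nonneg (sub_nonneg.2 hyx),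
    ← log_div (hy0.trans_le hyx).ne' hy0.ne']
  calc log (x / y) ≤ x / y - 1 := log_le_sub_one_of_pos (div_pos (hy0.trans_le hyx) hy0)
    _ = (x - y) / y := by field_simp
    _ ≤ (x - y) / m := div_le_div_of_nonneg_left (sub_nonneg.2 hyx) hm hy

theorem abs_log_sum_mul_div_sub_log_le {ι : Type*} {s : Finset ι} {w c c' : ι → ℝ} {κ δ : ℝ}
    (hw : ∀ i ∈ s, 0 ≤ w i) (hW : 0 < ∑ i ∈ s, w i) (hκ : 0 < κ)
    (hc : ∀ i ∈ s, κ ≤ c i) (hc' : ∀ i ∈ s, κ ≤ c' i) (hδ : ∀ i ∈ s, |c i - c' i| ≤ δ) :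
    |log ((∑ i ∈ s, w i * c i) / ∑ i ∈ s, w i) - log ((∑ i ∈ s, w i * c' i) / ∑ i ∈ s, w i)|
      ≤ δ / κ := by
  have hmean : ∀ d : ι → ℝ, (∀ i ∈ s, κ ≤ d i) → κ ≤ (∑ i ∈ s, w i * d i) / ∑ i ∈ s, w i :=
    fun d hd => by
      rw [le_div_iff₀ hW, mul_comm, Finset.sum_mul]
      exact Finset.sum_le_sum fun i hi => by nlinarith [hd i hi, hw i hi]
  have hdiff : |(∑ i ∈ s, w i * c i) / ∑ i ∈ s, w i - (∑ i ∈ s, w i * c' i) / ∑ i ∈ s, w i|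
      ≤ δ := by
    rw [← sub_div, abs_div, abs_of_pos hW, div_le_iff₀ hW, ← Finset.sum_sub_distrib,
      Finset.mul_sum]
    refine (Finset.abs_sum_le_sum_abs _ _).trans (Finset.sum_le_sum fun i hi => ?_)
    rw [← mul_sub, abs_mul, abs_of_nonneg (hw i hi), mul_comm]
    exact mul_le_mul_of_nonneg_right (hδ i hi) (hw i hi)
  exact (abs_log_sub_log_le_div hκ (hmean c hc) (hmean c' hc')).trans
    (div_le_div_of_nonneg_right hdiff hκ.le)

theorem log_return_lipschitz_in_generator_general
    (n : ℕ) (hn : 2 ≤ n)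
    (β : ℝ) (hβ : 0 < β)
    (ℓ ℓ' tℓ tℓ' : ℝ → ℝ)
    (hd : ∀ x ∈ Icc (0:ℝ) 1, HasDerivWithinAt ℓ (ℓ' x) (Icc (0:ℝ) 1) x)
    (htd : ∀ x ∈ Icc (0:ℝ) 1, HasDerivWithinAt tℓ (tℓ' x) (Icc (0:ℝ) 1) x)
    (hℓ'cont : ContinuousOn ℓ' (Icc (0:ℝ) 1))
    (htℓ'cont : ContinuousOn tℓ' (Icc (0:ℝ) 1))
    (hconc : ConcaveOn ℝ (Icc (0:ℝ) 1) (fun x => Real.exp (ℓ x)))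
    (htconc : ConcaveOn ℝ (Icc (0:ℝ) 1) (fun x => Real.exp (tℓ x)))
    (hlip : ∀ x ∈ Icc (0:ℝ) 1, ∀ y ∈ Icc (0:ℝ) 1, |ℓ' x - ℓ' y| ≤ β * |x - y|)
    (htlip : ∀ x ∈ Icc (0:ℝ) 1, ∀ y ∈ Icc (0:ℝ) 1, |tℓ' x - tℓ' y| ≤ β * |x - y|)
    (u r : Fin n → ℝ)
    (hu : ∀ i, u i ∈ Ioo (0:ℝ) 1) (hus : ∑ i, u i = 1)
    (hr : ∀ i, r i ∈ Ioo (0:ℝ) 1) :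
    |Real.log ((∑ i, (u i * (1 + (1/(n:ℝ)) * ℓ' (u i) - (1/(n:ℝ)) * ∑ j, u j * ℓ' (u j))) * r i)
          / (∑ i, u i * r i))
      - Real.log ((∑ i, (u i * (1 + (1/(n:ℝ)) * tℓ' (u i) - (1/(n:ℝ)) * ∑ j, u j * tℓ' (u j))) * r i)
          / (∑ i, u i * r i))|
      ≤ 2 * Real.exp (2 * Real.sqrt β / n) * ⨆ x : Icc (0:ℝ) 1, |ℓ' x - tℓ' x| := by
  have h : IsExpConcaveSmooth β ℓ ℓ' := ⟨hd, hconc, hlip⟩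
  have ht : IsExpConcaveSmooth β tℓ tℓ' := ⟨htd, htconc, htlip⟩
  have huI : ∀ i, u i ∈ Icc (0:ℝ) 1 := fun i => Ioo_subset_Icc_self (hu i)
  have hw : ∀ i, 0 < u i * r i := fun i => mul_pos (hu i).1 (hr i).1
  set D := ⨆ x : Icc (0:ℝ) 1, |ℓ' x - tℓ' x|
  have hD : ∀ i, |ℓ' (u i) - tℓ' (u i)| ≤ D := fun i =>
    (hℓ'cont.sub htℓ'cont).abs.le_iSup_Icc (huI i)
  simp only [mul_right_comm (u _) _ (r _)]
  refine (abs_log_sum_mul_div_sub_log_le (c := weightRatio n ℓ' u) (c' := weightRatio n tℓ' u)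
    (fun i _ => (hw i).le) (Finset.sum_pos (fun i _ => hw i) ⟨⟨0, by omega⟩, Finset.mem_univ _⟩)
    (by positivity) (fun i _ => h.exp_neg_div_le_weightRatio hβ hn huI hus i)
    (fun i _ => ht.exp_neg_div_le_weightRatio hβ hn huI hus i)
    (fun i _ => abs_weightRatio_sub_le (fun j => (hu j).1.le) hus hD i)).trans_eq ?_
  rw [exp_neg]
  field_simp

theorem log_return_lipschitz_in_generator
    (n : ℕ) (hn : 2 ≤ n)
    (β : ℝ) (hβ : 0 < β)
    (ℓ ℓ' tℓ tℓ' : ℝ → ℝ)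
    (hd : ∀ x ∈ Icc (0:ℝ) 1, HasDerivWithinAt ℓ (ℓ' x) (Icc (0:ℝ) 1) x)
    (htd : ∀ x ∈ Icc (0:ℝ) 1, HasDerivWithinAt tℓ (tℓ' x) (Icc (0:ℝ) 1) x)
    (hℓ'cont : ContinuousOn ℓ' (Icc (0:ℝ) 1))
    (htℓ'cont : ContinuousOn tℓ' (Icc (0:ℝ) 1))
    (hconc : ConcaveOn ℝ (Icc (0:ℝ) 1) (fun x => Real.exp (ℓ x)))
    (htconc : ConcaveOn ℝ (Icc (0:ℝ) 1) (fun x => Real.exp (tℓ x)))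
    (hnorm : ℓ (1/2) = 0) (htnorm : tℓ (1/2) = 0)
    (hlip : ∀ x ∈ Icc (0:ℝ) 1, ∀ y ∈ Icc (0:ℝ) 1, |ℓ' x - ℓ' y| ≤ β * |x - y|)
    (htlip : ∀ x ∈ Icc (0:ℝ) 1, ∀ y ∈ Icc (0:ℝ) 1, |tℓ' x - tℓ' y| ≤ β * |x - y|)
    (u r : Fin n → ℝ)
    (hu : ∀ i, u i ∈ Ioo (0:ℝ) 1) (hus : ∑ i, u i = 1)
    (hr : ∀ i, r i ∈ Ioo (0:ℝ) 1) (hrs : ∑ i, r i = 1) :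
    |Real.log ((∑ i, (u i * (1 + (1/(n:ℝ)) * ℓ' (u i) - (1/(n:ℝ)) * ∑ j, u j * ℓ' (u j))) * r i)
          / (∑ i, u i * r i))
      - Real.log ((∑ i, (u i * (1 + (1/(n:ℝ)) * tℓ' (u i) - (1/(n:ℝ)) * ∑ j, u j * tℓ' (u j))) * r i)
          / (∑ i, u i * r i))|
      ≤ 2 * Real.exp (2 * Real.sqrt β / n) * ⨆ x : Icc (0:ℝ) 1, |ℓ' x - tℓ' x| :=
  log_return_lipschitz_in_generator_general n hn β hβ ℓ ℓ' tℓ tℓ' hd htd hℓ'cont htℓ'cont hconc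
    htconc hlip htlip u r hu hus hr
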